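/- Let n ≥ 1 be an integer and β > n. Then there exists a constant C depending only on n and β (in particular independent of Ω) such that for every open convex set Ω ⊂ ℝ^{n+1}: ∫_{∂Ω ∖ B_1(0)} |x|^{−β} dℋ^n(x) ≤ C, where B_1(0) is the open unit ball of ℝ^{n+1} centered at the origin. -/

import Mathlib

open MeasureTheory Metric Set
open scoped ENNReal NNReal RealInnerProductSpace

section proj
variable {E : Type*} [NormedAddCommGroup E] [InnerProductSpace ℝ E] [CompleteSpace E]

lemma exists_lipschitz_projection {K : Set E} (hne : K.Nonempty) (hc : IsClosed K)
    (hconv : Convex ℝ K) :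
    ∃ p : E → E, (∀ u, p u ∈ K) ∧ LipschitzWith 1 p ∧
      ∀ u, ∀ w ∈ K, ⟪u - p u, w - p u⟫ ≤ 0 := by
  obtain ⟨p, hp, hmin⟩ : ∃ p : E → E, (∀ u, p u ∈ K) ∧ ∀ u, ‖u - p u‖ = ⨅ w : K, ‖u - w‖ := by
    have h := exists_norm_eq_iInf_of_complete_convex hne hc.isComplete hconv
    choose p hp hmin using h
    exact ⟨p, hp, hmin⟩
  have hvar : ∀ u, ∀ w ∈ K, ⟪u - p u, w - p u⟫ ≤ 0 := fun u =>
    (norm_eq_iInf_iff_real_inner_le_zero hconv (hp u)).1 (hmin u)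
  refine ⟨p, hp, LipschitzWith.of_dist_le_mul fun u v => ?_, hvar⟩
  rw [NNReal.coe_one, one_mul, dist_eq_norm, dist_eq_norm]
  have h1 : ⟪u - p u, p v - p u⟫ ≤ 0 := hvar u _ (hp v)
  have h2 : ⟪v - p v, p u - p v⟫ ≤ 0 := hvar v _ (hp u)
  have key : ‖p u - p v‖ ^ 2 ≤ ⟪u - v, p u - p v⟫ := by
    have hdecomp : u - v = (u - p u) + (p u - p v) + (p v - v) := by abel
    rw [hdecomp, inner_add_left, inner_add_left, real_inner_self_eq_norm_sq]
    have h2' : (0:ℝ) ≤ ⟪p v - v, p u - p v⟫ := by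
      rw [show p v - v = -(v - p v) by abel, inner_neg_left]; linarith
    have h1' : (0:ℝ) ≤ ⟪u - p u, p u - p v⟫ := by
      rw [show p u - p v = -(p v - p u) by abel, inner_neg_right]; linarith
    linarith
  have hcs := real_inner_le_norm (u - v) (p u - p v)
  rcases eq_or_lt_of_le (norm_nonneg (p u - p v)) with h0 | h0
  · rw [← h0]; exact norm_nonneg _
  · have h : ‖p u - p v‖ * ‖p u - p v‖ ≤ ‖u - v‖ * ‖p u - p v‖ := by nlinarith
    exact le_of_mul_le_mul_right h h0

lemma proj_eq_of_inner {K : Set E} {y x q : E} (hx : x ∈ K) (hq : q ∈ K)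
    (h1 : ∀ w ∈ K, ⟪y - x, w - x⟫ ≤ 0) (h2 : ∀ w ∈ K, ⟪y - q, w - q⟫ ≤ 0) : q = x := by
  have a := h1 q hq
  have b := h2 x hx
  have hqx : ⟪q - x, q - x⟫ ≤ 0 := by
    have hsplit : ⟪q - x, q - x⟫ = ⟪y - x, q - x⟫ - ⟪y - q, q - x⟫ := by
      rw [← inner_sub_left]; congr 1; abel
    have hneg : ⟪y - q, q - x⟫ = -⟪y - q, x - q⟫ := by
      rw [show q - x = -(x - q) by abel, inner_neg_right]
    rw [hsplit, hneg]; linarith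
  have := real_inner_self_nonpos.1 hqx
  rwa [sub_eq_zero] at this

end proj


lemma abs_coord_le {m : ℕ} (y : EuclideanSpace ℝ (Fin m)) (i : Fin m) : |y i| ≤ ‖y‖ := by
  rw [EuclideanSpace.norm_eq, ← Real.sqrt_sq_eq_abs]
  apply Real.sqrt_le_sqrt
  have h : (y i) ^ 2 = ‖y i‖ ^ 2 := by rw [Real.norm_eq_abs, sq_abs]
  rw [h]
  exact Finset.single_le_sum (f := fun j => ‖y j‖ ^ 2) (fun j _ => sq_nonneg _)
    (Finset.mem_univ i)

lemma pi_norm_le_euclid {m : ℕ} (y : EuclideanSpace ℝ (Fin m)) :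
    ‖(WithLp.equiv 2 (Fin m → ℝ)) y‖ ≤ ‖y‖ := by
  refine (pi_norm_le_iff_of_nonneg (norm_nonneg y)).2 fun i => ?_
  simpa [Real.norm_eq_abs] using abs_coord_le y i

lemma euclid_norm_le_sqrt_pi {m : ℕ} (y : EuclideanSpace ℝ (Fin m)) :
    ‖y‖ ≤ Real.sqrt m * ‖(WithLp.equiv 2 (Fin m → ℝ)) y‖ := by
  set s := ‖(WithLp.equiv 2 (Fin m → ℝ)) y‖ with hs
  have hs0 : 0 ≤ s := norm_nonneg _
  rw [EuclideanSpace.norm_eq]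
  have hsum : ∑ i, ‖y i‖ ^ 2 ≤ (m : ℝ) * s ^ 2 := by
    calc ∑ i, ‖y i‖ ^ 2 ≤ ∑ _i : Fin m, s ^ 2 := by
          refine Finset.sum_le_sum fun i _ => ?_
          have := norm_le_pi_norm ((WithLp.equiv 2 (Fin m → ℝ)) y) i
          exact pow_le_pow_left₀ (norm_nonneg _) this 2
      _ = (m : ℝ) * s ^ 2 := by simp [Finset.sum_const, nsmul_eq_mul]
  calc Real.sqrt (∑ i, ‖y i‖ ^ 2) ≤ Real.sqrt ((m : ℝ) * s ^ 2) := Real.sqrt_le_sqrt hsum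
    _ = Real.sqrt m * s := by rw [Real.sqrt_mul (Nat.cast_nonneg m), Real.sqrt_sq hs0]

noncomputable def fmap {m : ℕ} (i : Fin (m + 1)) (s : ℝ) (u : Fin m → ℝ) :
    EuclideanSpace ℝ (Fin (m + 1)) :=
  (WithLp.equiv 2 (Fin (m + 1) → ℝ)).symm (i.insertNth s u)

lemma sqrt_nat_le (m : ℕ) : Real.sqrt m ≤ (m : ℝ) := by
  rcases Nat.eq_zero_or_pos m with h | h
  · simp [h]
  · have h1 : (m : ℝ) ≤ (m : ℝ) ^ 2 := by
      have : (1 : ℝ) ≤ (m : ℝ) := by exact_mod_cast h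
      nlinarith
    calc Real.sqrt m ≤ Real.sqrt ((m : ℝ) ^ 2) := Real.sqrt_le_sqrt h1
      _ = (m : ℝ) := Real.sqrt_sq (Nat.cast_nonneg m)

lemma fmap_lipschitz {m : ℕ} (i : Fin (m + 1)) (s : ℝ) :
    LipschitzWith (m : ℝ≥0) (fmap i s) := by
  refine LipschitzWith.of_dist_le_mul fun u v => ?_
  rw [EuclideanSpace.dist_eq]
  have hcoord : ∑ j, dist (fmap i s u j) (fmap i s v j) ^ 2
      = ∑ j : Fin m, dist (u j) (v j) ^ 2 := by
    rw [Fin.sum_univ_succAbove (fun j => dist (fmap i s u j) (fmap i s v j) ^ 2) i]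
    simp [fmap, WithLp.equiv_symm_apply, PiLp.toLp_apply, Fin.insertNth_apply_same,
      Fin.insertNth_apply_succAbove]
  rw [hcoord]
  have hb : ∑ j : Fin m, dist (u j) (v j) ^ 2 ≤ (m : ℝ) * dist u v ^ 2 := by
    calc ∑ j : Fin m, dist (u j) (v j) ^ 2 ≤ ∑ _j : Fin m, dist u v ^ 2 :=
          Finset.sum_le_sum fun j _ => pow_le_pow_left₀ dist_nonneg (dist_le_pi_dist u v j) 2
      _ = (m : ℝ) * dist u v ^ 2 := by simp [Finset.sum_const, nsmul_eq_mul]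
  calc Real.sqrt (∑ j : Fin m, dist (u j) (v j) ^ 2)
      ≤ Real.sqrt ((m : ℝ) * dist u v ^ 2) := Real.sqrt_le_sqrt hb
    _ = Real.sqrt m * dist u v := by
        rw [Real.sqrt_mul (Nat.cast_nonneg m), Real.sqrt_sq dist_nonneg]
    _ ≤ ((m : ℝ≥0) : ℝ) * dist u v := by
        push_cast
        exact mul_le_mul_of_nonneg_right (sqrt_nat_le m) dist_nonneg

lemma fmap_image_measure {m : ℕ} (i : Fin (m + 1)) (s c : ℝ) (hc : 0 ≤ c) :
    μH[(m:ℝ)] (fmap i s '' Metric.closedBall (0 : Fin m → ℝ) c)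
      ≤ ((m : ℝ≥0∞)) ^ (m : ℝ) * ENNReal.ofReal ((2 * c) ^ m) := by
  have h := (fmap_lipschitz i s).hausdorffMeasure_image_le (Nat.cast_nonneg m)
    (Metric.closedBall (0 : Fin m → ℝ) c)
  refine h.trans ?_
  have hH : (μH[(m:ℝ)] : Measure (Fin m → ℝ)) = volume := by
    simpa [Fintype.card_fin] using hausdorffMeasure_pi_real (ι := Fin m)
  rw [hH, Real.volume_pi_closedBall _ hc, Fintype.card_fin]
  norm_cast


lemma frontier_measure_le (n : ℕ) (Ω : Set (EuclideanSpace ℝ (Fin (n+1))))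
    (hΩo : IsOpen Ω) (hΩc : Convex ℝ Ω) {R : ℝ} (hR : 1 ≤ R) :
    μH[(n:ℝ)] (frontier Ω ∩ Metric.closedBall 0 R)
      ≤ (2 * ((n:ℝ≥0∞) + 1)) * (n : ℝ≥0∞) ^ (n : ℝ) * ENNReal.ofReal ((16 * R) ^ n) := by
  classical
  rcases (frontier Ω ∩ Metric.closedBall 0 R).eq_empty_or_nonempty with he | ⟨x₀, hx₀f, hx₀b⟩
  · simp [he]
  have hR0 : (0:ℝ) < R := lt_of_lt_of_le one_pos hR
  set R' : ℝ := 2 * R + 2 with hR'def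
  set c : ℝ := 2 * R' with hcdef
  have hcpos : (0:ℝ) < c := by rw [hcdef, hR'def]; linarith
  have hRc : R < c := by rw [hcdef, hR'def]; linarith
  have hx₀cl : x₀ ∈ closure Ω := frontier_subset_closure hx₀f
  obtain ⟨z, hz1, hz2⟩ := mem_closure_iff.1 hx₀cl (Metric.ball x₀ 1) Metric.isOpen_ball
    (Metric.mem_ball_self one_pos)
  have hx₀norm : ‖x₀‖ ≤ R := mem_closedBall_zero_iff.1 hx₀b
  have hznorm : ‖z‖ < R' := by
    have h1 : ‖z - x₀‖ < 1 := by rw [← dist_eq_norm]; exact Metric.mem_ball.1 hz1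
    have h2 : ‖z‖ - ‖x₀‖ ≤ ‖z - x₀‖ := norm_sub_norm_le z x₀
    rw [hR'def]; linarith
  have hzball : z ∈ Metric.ball (0 : EuclideanSpace ℝ (Fin (n+1))) R' :=
    mem_ball_zero_iff.2 hznorm
  set K := closure (Ω ∩ Metric.ball (0 : EuclideanSpace ℝ (Fin (n+1))) R') with hKdef
  have hKne : K.Nonempty := ⟨z, subset_closure ⟨hz2, hzball⟩⟩
  have hKconv : Convex ℝ K := (hΩc.inter (convex_ball 0 R')).closure
  obtain ⟨p, hpK, hpl, hpvar⟩ := exists_lipschitz_projection hKne isClosed_closure hKconv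
  set Q := Metric.closedBall (0 : Fin n → ℝ) c with hQdef
  set T := ⋃ i : Fin (n+1), (fmap i c '' Q ∪ fmap i (-c) '' Q) with hTdef
  have hsub : frontier Ω ∩ Metric.closedBall 0 R ⊆ p '' T := by
    rintro x ⟨hxf, hxb⟩
    have hxcl : x ∈ closure Ω := frontier_subset_closure hxf
    have hxnot : x ∉ Ω := by
      rw [hΩo.frontier_eq] at hxf; exact hxf.2
    have hxnorm : ‖x‖ ≤ R := mem_closedBall_zero_iff.1 hxb
    have hxK : x ∈ K := by
      have hmem : ∀ k : ℕ, (((k:ℝ)+2)⁻¹) • z + (1 - ((k:ℝ)+2)⁻¹) • x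
          ∈ Ω ∩ Metric.ball (0 : EuclideanSpace ℝ (Fin (n+1))) R' := by
        intro k
        have hapos : (0:ℝ) < ((k:ℝ)+2)⁻¹ := by positivity
        have halt : ((k:ℝ)+2)⁻¹ < 1 := by
          rw [inv_lt_one_iff₀]; right; linarith [Nat.cast_nonneg (α := ℝ) k]
        constructor
        · have hseg : openSegment ℝ z x ⊆ interior Ω :=
            hΩc.openSegment_interior_closure_subset_interior (by rwa [hΩo.interior_eq]) hxcl
          have hm : (((k:ℝ)+2)⁻¹) • z + (1 - ((k:ℝ)+2)⁻¹) • x ∈ openSegment ℝ z x :=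
            ⟨_, _, hapos, by linarith, by ring, rfl⟩
          have := hseg hm; rwa [hΩo.interior_eq] at this
        · rw [mem_ball_zero_iff]
          have hb0 : (0:ℝ) < 1 - ((k:ℝ)+2)⁻¹ := by linarith
          calc ‖(((k:ℝ)+2)⁻¹) • z + (1 - ((k:ℝ)+2)⁻¹) • x‖
              ≤ ((k:ℝ)+2)⁻¹ * ‖z‖ + (1 - ((k:ℝ)+2)⁻¹) * ‖x‖ := by
                refine (norm_add_le _ _).trans ?_
                rw [norm_smul, norm_smul, Real.norm_eq_abs, Real.norm_eq_abs,
                  abs_of_pos hapos, abs_of_pos hb0]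
            _ < R' := by
                have hxR' : ‖x‖ < R' := by rw [hR'def]; linarith
                nlinarith [norm_nonneg z, norm_nonneg x]
      have htend : Filter.Tendsto
          (fun k : ℕ => (((k:ℝ)+2)⁻¹) • z + (1 - ((k:ℝ)+2)⁻¹) • x)
          Filter.atTop (nhds x) := by
        have h0 : Filter.Tendsto (fun k : ℕ => ((k:ℝ)+2)⁻¹) Filter.atTop (nhds 0) := by
          apply tendsto_inv_atTop_zero.comp
          exact Filter.tendsto_atTop_add_const_right _ 2 tendsto_natCast_atTop_atTop
        have h1 : Filter.Tendsto
            (fun k : ℕ => (((k:ℝ)+2)⁻¹) • z + (1 - ((k:ℝ)+2)⁻¹) • x)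
            Filter.atTop (nhds ((0:ℝ) • z + ((1:ℝ) - 0) • x)) :=
          (h0.smul_const z).add (((tendsto_const_nhds (x := (1:ℝ))).sub h0).smul_const x)
        simpa using h1
      exact mem_closure_of_tendsto htend (Filter.Eventually.of_forall hmem)
    obtain ⟨f, hf⟩ := geometric_hahn_banach_open_point hΩc hΩo hxnot
    set v : EuclideanSpace ℝ (Fin (n+1)) :=
      (InnerProductSpace.toDual ℝ (EuclideanSpace ℝ (Fin (n+1)))).symm f with hvdef
    have hvapp : ∀ w, ⟪v, w⟫ = f w := by
      intro w; rw [hvdef]; exact InnerProductSpace.toDual_symm_apply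
    have hvne : v ≠ 0 := by
      intro h0
      have h1 := hf z hz2
      rw [← hvapp z, ← hvapp x, h0, inner_zero_left, inner_zero_left] at h1
      exact lt_irrefl _ h1
    have hvpos : 0 < ‖v‖ := norm_pos_iff.2 hvne
    have hfle : ∀ w ∈ K, ⟪v, w - x⟫ ≤ 0 := by
      intro w hw
      have hwcl : w ∈ closure Ω := closure_mono inter_subset_left hw
      have hle : f w ≤ f x :=
        closure_minimal (fun a ha => le_of_lt (hf a ha))
          (isClosed_le f.continuous continuous_const) hwcl
      rw [inner_sub_right, hvapp, hvapp]; linarith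
    set s : ℝ := Real.sqrt (n+1) with hsdef
    have hspos : 0 < s := Real.sqrt_pos.2 (by positivity)
    have hmc : Continuous (fun t : ℝ =>
        ‖(WithLp.equiv 2 (Fin (n+1) → ℝ)) (x + t • v)‖) := by
      apply continuous_norm.comp
      exact (PiLp.continuous_ofLp 2 (fun _ : Fin (n+1) => ℝ)).comp
        (continuous_const.add (continuous_id.smul continuous_const))
    set T0 : ℝ := (c * s + R) / ‖v‖ with hT0def
    have hT0 : 0 ≤ T0 := by positivity
    have hmT : c ≤ ‖(WithLp.equiv 2 (Fin (n+1) → ℝ)) (x + T0 • v)‖ := by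
      have h1 : T0 * ‖v‖ = c * s + R := div_mul_cancel₀ _ (ne_of_gt hvpos)
      have h3 : ‖T0 • v‖ ≤ ‖x + T0 • v‖ + ‖x‖ := by
        calc ‖T0 • v‖ = ‖(x + T0 • v) - x‖ := by congr 1; abel
          _ ≤ ‖x + T0 • v‖ + ‖x‖ := norm_sub_le _ _
      rw [norm_smul, Real.norm_eq_abs, abs_of_nonneg hT0] at h3
      have h2 : c * s ≤ ‖x + T0 • v‖ := by rw [h1] at h3; linarith
      have h4 := euclid_norm_le_sqrt_pi (x + T0 • v)
      push_cast at h4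
      nlinarith [h2, h4, hspos, hsdef]
    have hcmem : c ∈ Icc (‖(WithLp.equiv 2 (Fin (n+1) → ℝ)) (x + (0:ℝ) • v)‖)
        (‖(WithLp.equiv 2 (Fin (n+1) → ℝ)) (x + T0 • v)‖) := by
      constructor
      · have h0 : ‖(WithLp.equiv 2 (Fin (n+1) → ℝ)) (x + (0:ℝ) • v)‖ ≤ R := by
          simp only [zero_smul, add_zero]
          exact (pi_norm_le_euclid x).trans hxnorm
        linarith
      · exact hmT
    obtain ⟨t, htI, hmt⟩ := intermediate_value_Icc hT0 hmc.continuousOn hcmem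
    refine ⟨x + t • v, ?_, ?_⟩
    · -- x + t•v ∈ T
      have hwnorm : ‖(WithLp.equiv 2 (Fin (n+1) → ℝ)) (x + t • v)‖ = c := hmt
      set w : Fin (n+1) → ℝ := (WithLp.equiv 2 (Fin (n+1) → ℝ)) (x + t • v) with hwdef
      obtain ⟨i, -, hi⟩ := Finset.exists_mem_eq_sup (Finset.univ : Finset (Fin (n+1)))
        Finset.univ_nonempty (fun j => ‖w j‖₊)
      have hwi : |w i| = c := by
        have he1 : ‖w‖₊ = ‖w i‖₊ := by rw [Pi.nnnorm_def]; exact hi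
        have he2 := congrArg (fun a : ℝ≥0 => (a : ℝ)) he1
        simp only [coe_nnnorm] at he2
        rw [← Real.norm_eq_abs, ← he2, hwnorm]
      have hwles : ∀ j, |w j| ≤ c := fun j => by
        have h := norm_le_pi_norm w j
        rwa [hwnorm, Real.norm_eq_abs] at h
      have hrQ : i.removeNth w ∈ Q := by
        rw [hQdef, mem_closedBall_zero_iff]
        refine (pi_norm_le_iff_of_nonneg (le_of_lt hcpos)).2 fun j => ?_
        simpa [Fin.removeNth, Real.norm_eq_abs] using hwles (i.succAbove j)
      have hyeq : fmap i (w i) (i.removeNth w) = x + t • v := by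
        rw [fmap, Fin.insertNth_self_removeNth, hwdef, Equiv.symm_apply_apply]
      rcases (abs_eq (le_of_lt hcpos)).1 hwi with h | h
      · exact mem_iUnion.2 ⟨i, Or.inl ⟨_, hrQ, by rw [← h]; exact hyeq⟩⟩
      · exact mem_iUnion.2 ⟨i, Or.inr ⟨_, hrQ, by rw [← h]; exact hyeq⟩⟩
    · -- p (x + t•v) = x
      apply proj_eq_of_inner hxK (hpK _) ?_ (hpvar _)
      intro w hw
      have hyx : (x + t • v) - x = t • v := by abel
      rw [hyx, real_inner_smul_left]
      have ht0 := htI.1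
      have hin := hfle w hw
      nlinarith [ht0, hin]
  have hD : ∀ (i : Fin (n+1)) (sgn : ℝ),
      μH[(n:ℝ)] (fmap i sgn '' Q) ≤ (n : ℝ≥0∞) ^ (n : ℝ) * ENNReal.ofReal ((16 * R) ^ n) := by
    intro i sgn
    refine (fmap_image_measure i sgn c hcpos.le).trans (mul_le_mul' le_rfl ?_)
    have h2c : (0:ℝ) ≤ 2 * c := by linarith
    have hle : 2 * c ≤ 16 * R := by rw [hcdef, hR'def]; linarith
    exact ENNReal.ofReal_le_ofReal (pow_le_pow_left₀ h2c hle n)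
  calc μH[(n:ℝ)] (frontier Ω ∩ Metric.closedBall 0 R)
      ≤ μH[(n:ℝ)] (p '' T) := measure_mono hsub
    _ ≤ (1 : ℝ≥0∞) ^ (n:ℝ) * μH[(n:ℝ)] T := by
        simpa using hpl.hausdorffMeasure_image_le (Nat.cast_nonneg n) T
    _ = μH[(n:ℝ)] T := by simp
    _ ≤ ∑ i : Fin (n+1), μH[(n:ℝ)] (fmap i c '' Q ∪ fmap i (-c) '' Q) :=
        measure_iUnion_fintype_le _ _
    _ ≤ ∑ _i : Fin (n+1),
          ((n : ℝ≥0∞) ^ (n : ℝ) * ENNReal.ofReal ((16 * R) ^ n)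
            + (n : ℝ≥0∞) ^ (n : ℝ) * ENNReal.ofReal ((16 * R) ^ n)) := by
        refine Finset.sum_le_sum fun i _ => (measure_union_le _ _).trans ?_
        exact add_le_add (hD i c) (hD i (-c))
    _ = (2 * ((n:ℝ≥0∞) + 1)) * (n : ℝ≥0∞) ^ (n : ℝ) * ENNReal.ofReal ((16 * R) ^ n) := by
        rw [Finset.sum_const, Finset.card_univ, Fintype.card_fin, nsmul_eq_mul]
        push_cast
        ring


/-- Universal bound for `∫_{∂Ω ∖ B_1(0)} |x|^{-β} dℋ^n` over boundaries of open convex sets,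
when `β > n`. -/
theorem weighted_integral_outside_ball_on_convex_boundaries
    (n : ℕ) (hn : 1 ≤ n) (β : ℝ) (hβ : (n:ℝ) < β) :
    ∃ C : ℝ≥0, ∀ (Ω : Set (EuclideanSpace ℝ (Fin (n+1)))), IsOpen Ω → Convex ℝ Ω →
      (∫⁻ x in frontier Ω \ Metric.ball (0 : EuclideanSpace ℝ (Fin (n+1))) 1,
          (‖x‖₊ : ℝ≥0∞) ^ (-β) ∂μH[(n:ℝ)]) ≤ (C : ℝ≥0∞) := by
  have hβ0 : 0 ≤ β := le_trans (Nat.cast_nonneg n) (le_of_lt hβ)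
  set r : ℝ≥0∞ := (2 : ℝ≥0∞) ^ ((n:ℝ) - β) with hrdef
  set B : ℝ≥0∞ := (2 * ((n:ℝ≥0∞) + 1)) * (n : ℝ≥0∞) ^ (n : ℝ) * (32 : ℝ≥0∞) ^ n with hBdef
  have hrlt : r < 1 := ENNReal.rpow_lt_one_of_one_lt_of_neg (by norm_num : (1:ℝ≥0∞) < 2) (by linarith)
  have hBne : B ≠ ⊤ := by
    refine ENNReal.mul_ne_top (ENNReal.mul_ne_top ?_ ?_) ?_
    · exact ENNReal.mul_ne_top (by simp) (by simp [ENNReal.add_ne_top])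
    · exact ENNReal.rpow_ne_top_of_nonneg (Nat.cast_nonneg n) (ENNReal.natCast_ne_top n)
    · exact ENNReal.pow_ne_top (by simp)
  have hSne : B * (1 - r)⁻¹ ≠ ⊤ :=
    ENNReal.mul_ne_top hBne (ENNReal.inv_ne_top.2 (tsub_pos_of_lt hrlt).ne')
  refine ⟨(B * (1 - r)⁻¹).toNNReal, ?_⟩
  intro Ω hΩo hΩc
  rw [ENNReal.coe_toNNReal hSne]
  have hcover : frontier Ω \ Metric.ball (0 : EuclideanSpace ℝ (Fin (n+1))) 1 ⊆
      ⋃ k : ℕ, frontier Ω ∩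
        (Metric.closedBall (0 : EuclideanSpace ℝ (Fin (n+1))) (2^(k+1))
          \ Metric.ball (0 : EuclideanSpace ℝ (Fin (n+1))) (2^k)) := by
    rintro x ⟨hxf, hxb⟩
    have hx1 : 1 ≤ ‖x‖ := by
      by_contra h
      exact hxb (mem_ball_zero_iff.2 (lt_of_not_ge h))
    have hex : ∃ k : ℕ, ‖x‖ < 2^(k+1) := by
      obtain ⟨k, hk⟩ := pow_unbounded_of_one_lt ‖x‖ (one_lt_two (α := ℝ))
      exact ⟨k, hk.trans_le (pow_le_pow_right₀ one_le_two (Nat.le_succ k))⟩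
    refine mem_iUnion.2 ⟨Nat.find hex, hxf, ?_, ?_⟩
    · exact mem_closedBall_zero_iff.2 (le_of_lt (Nat.find_spec hex))
    · intro hball
      have hlt : ‖x‖ < 2^(Nat.find hex) := mem_ball_zero_iff.1 hball
      rcases Nat.eq_zero_or_pos (Nat.find hex) with h0 | h0
      · rw [h0] at hlt; norm_num at hlt; linarith
      · have hmin := Nat.find_min hex (m := Nat.find hex - 1) (by omega)
        apply hmin
        have he : Nat.find hex - 1 + 1 = Nat.find hex := by omega
        rw [he]
        exact hlt
  refine le_trans (lintegral_mono_set hcover) ?_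
  refine le_trans (lintegral_iUnion_le _ _) ?_
  have hterm : ∀ k : ℕ,
      (∫⁻ x in frontier Ω ∩
          (Metric.closedBall (0 : EuclideanSpace ℝ (Fin (n+1))) (2^(k+1))
            \ Metric.ball (0 : EuclideanSpace ℝ (Fin (n+1))) (2^k)),
        (‖x‖₊ : ℝ≥0∞) ^ (-β) ∂μH[(n:ℝ)]) ≤ B * r ^ k := by
    intro k
    have hms : MeasurableSet (frontier Ω ∩
        (Metric.closedBall (0 : EuclideanSpace ℝ (Fin (n+1))) (2^(k+1))
          \ Metric.ball (0 : EuclideanSpace ℝ (Fin (n+1))) (2^k))) :=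
      isClosed_frontier.measurableSet.inter
        (measurableSet_closedBall.diff measurableSet_ball)
    have hpt : ∀ x ∈ frontier Ω ∩
        (Metric.closedBall (0 : EuclideanSpace ℝ (Fin (n+1))) (2^(k+1))
          \ Metric.ball (0 : EuclideanSpace ℝ (Fin (n+1))) (2^k)),
        (‖x‖₊ : ℝ≥0∞) ^ (-β) ≤ ((2:ℝ≥0∞)^k)^(-β) := by
      rintro x ⟨-, -, hxk⟩
      have hxknorm : (2:ℝ)^k ≤ ‖x‖ := by
        by_contra h
        exact hxk (mem_ball_zero_iff.2 (lt_of_not_ge h))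
      have h2k : ((2:ℝ≥0∞)^k) ≤ (‖x‖₊ : ℝ≥0∞) := by
        have h : ((2:ℝ≥0)^k) ≤ ‖x‖₊ := by
          rw [← NNReal.coe_le_coe]
          push_cast
          simpa [coe_nnnorm] using hxknorm
        exact_mod_cast h
      rw [ENNReal.rpow_neg, ENNReal.rpow_neg]
      exact ENNReal.inv_le_inv.2 (ENNReal.rpow_le_rpow h2k hβ0)
    calc (∫⁻ x in frontier Ω ∩
          (Metric.closedBall (0 : EuclideanSpace ℝ (Fin (n+1))) (2^(k+1))
            \ Metric.ball (0 : EuclideanSpace ℝ (Fin (n+1))) (2^k)),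
          (‖x‖₊ : ℝ≥0∞) ^ (-β) ∂μH[(n:ℝ)])
        ≤ ∫⁻ _x in frontier Ω ∩
            (Metric.closedBall (0 : EuclideanSpace ℝ (Fin (n+1))) (2^(k+1))
              \ Metric.ball (0 : EuclideanSpace ℝ (Fin (n+1))) (2^k)),
            ((2:ℝ≥0∞)^k)^(-β) ∂μH[(n:ℝ)] := setLIntegral_mono' hms hpt
      _ = ((2:ℝ≥0∞)^k)^(-β) * μH[(n:ℝ)] (frontier Ω ∩
            (Metric.closedBall (0 : EuclideanSpace ℝ (Fin (n+1))) (2^(k+1))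
              \ Metric.ball (0 : EuclideanSpace ℝ (Fin (n+1))) (2^k))) :=
          setLIntegral_const _ _
      _ ≤ ((2:ℝ≥0∞)^k)^(-β) * ((2 * ((n:ℝ≥0∞) + 1)) * (n : ℝ≥0∞) ^ (n : ℝ)
            * ENNReal.ofReal ((16 * (2:ℝ)^(k+1)) ^ n)) := by
          refine mul_le_mul' le_rfl ?_
          refine le_trans (measure_mono (inter_subset_inter_right _ diff_subset)) ?_
          exact frontier_measure_le n Ω hΩo hΩc (one_le_pow₀ one_le_two)
      _ = B * r ^ k := by
          have hofReal : ENNReal.ofReal ((16 * (2:ℝ)^(k+1)) ^ n)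
              = ((32:ℝ≥0∞) * 2^k)^n := by
            rw [show (16 * (2:ℝ)^(k+1)) = 32 * 2^k by ring]
            rw [ENNReal.ofReal_pow (by positivity), ENNReal.ofReal_mul (by norm_num),
              ENNReal.ofReal_ofNat, ENNReal.ofReal_pow (by norm_num), ENNReal.ofReal_ofNat]
          have e1 : ((2:ℝ≥0∞)^k)^(-β) = (2:ℝ≥0∞)^((k:ℝ)*(-β)) := by
            rw [← ENNReal.rpow_natCast 2 k, ← ENNReal.rpow_mul]
          have e2 : ((2:ℝ≥0∞)^k)^n = (2:ℝ≥0∞)^((k:ℝ)*(n:ℝ)) := by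
            rw [← pow_mul, ← ENNReal.rpow_natCast 2 (k*n)]
            push_cast
            ring_nf
          have e3 : (2:ℝ≥0∞)^((k:ℝ)*(n:ℝ)) * (2:ℝ≥0∞)^((k:ℝ)*(-β)) = r ^ k := by
            rw [← ENNReal.rpow_add _ _ two_ne_zero ENNReal.ofNat_ne_top,
              show (k:ℝ)*(n:ℝ) + (k:ℝ)*(-β) = ((n:ℝ) - β)*(k:ℝ) by ring,
              ENNReal.rpow_mul, ENNReal.rpow_natCast]
          rw [hofReal, mul_pow, e1, e2, hBdef, ← e3]
          ring
  refine le_trans (ENNReal.tsum_le_tsum hterm) ?_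
  rw [ENNReal.tsum_mul_left, ENNReal.tsum_geometric]
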